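/- arXiv:1510.08393 — 2 statements merged into one kernel-verified Lean document; each statement's English description precedes it below -/
import Mathlib

section
/- Let Σ be a finite signature, f a function symbol of arity k not in Σ, and ψ a case-2 regular clause over Σ ∪ {f} (i.e., ψ is a disjunction of equations and negated equations between (Σ∪{f})-terms without ITE, each equation contains at most one occurrence of f, and f occurs in exactly one negated equation of ψ and nowhere else). Then the set {w ∈ T(Σ, {x1,…,xk}) : ψ{w/f} is valid} is a regular tree language over Σ ∪ {x1,…,xk} (with x1,…,xk treated as constants). -/
namespace SyGuS

/-- Terms over a ranked alphabet: symbols `F`, each of arity `ar f`. -/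
inductive Tm (F : Type) (ar : F → ℕ) : Type
  | app (f : F) (args : Fin (ar f) → Tm F ar) : Tm F ar

/-- Arity function on `F ⊕ Fin k`: the `k` extra symbols are constants
(the variables `x₁,…,x_k`, treated as constants). -/
abbrev varAr {F : Type} (ar : F → ℕ) (k : ℕ) : F ⊕ Fin k → ℕ := Sum.elim ar fun _ => 0

/-- Arity function on `F ⊕ Unit`: the extra symbol is the function symbol `f` of arity `k`. -/
abbrev fAr {F : Type} (ar : F → ℕ) (k : ℕ) : F ⊕ Unit → ℕ := Sum.elim ar fun _ => k

/-- A (nonempty) first-order structure for the ranked alphabet `(F, ar)`. -/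
structure Str (F : Type) (ar : F → ℕ) : Type 1 where
  D : Type
  [nonemptyD : Nonempty D]
  interp : (f : F) → (Fin (ar f) → D) → D

attribute [instance] Str.nonemptyD

/-- Evaluation of a ground term in a structure. -/
def Tm.eval {F : Type} {ar : F → ℕ} (M : Str F ar) : Tm F ar → M.D
  | .app f args => M.interp f fun i => (args i).eval M

/-- First-order substitution: replace the variables `x₁,…,x_k` by terms. -/
def Tm.instVars {F : Type} {ar : F → ℕ} {k : ℕ} (σ : Fin k → Tm F ar) :
    Tm (F ⊕ Fin k) (varAr ar k) → Tm F ar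
  | .app (Sum.inl g) args => .app g fun i => Tm.instVars σ (args i)
  | .app (Sum.inr i) _ => σ i

/-- Second-order substitution `·{w/f}`: replace every application `f(s₁,…,s_k)` of the
distinguished symbol `f` by `w{s₁/x₁,…,s_k/x_k}`. -/
def Tm.soSubst {F : Type} {ar : F → ℕ} {k : ℕ} (w : Tm (F ⊕ Fin k) (varAr ar k)) :
    Tm (F ⊕ Unit) (fAr ar k) → Tm F ar
  | .app (Sum.inl g) args => .app g fun i => Tm.soSubst w (args i)
  | .app (Sum.inr _) args => Tm.instVars (fun i => Tm.soSubst w (args i)) w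

/-- Renaming of symbols along an arity-preserving map. -/
def Tm.rename {F G : Type} {arF : F → ℕ} {arG : G → ℕ} (h : F → G)
    (hh : ∀ f, arG (h f) = arF f) : Tm F arF → Tm G arG
  | .app f args => .app (h f) fun i => (args (Fin.cast (hh f) i)).rename h hh

/-- Equational consequence: `E ⊢ s = t` iff every structure satisfying all
equations of `E` also satisfies `s = t`. -/
def EqCons {F : Type} {ar : F → ℕ} (E : Set (Tm F ar × Tm F ar)) (s t : Tm F ar) : Prop :=
  ∀ M : Str F ar, (∀ e ∈ E, Tm.eval M e.1 = Tm.eval M e.2) → s.eval M = t.eval M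

/-- Number of occurrences of the distinguished symbol `f` (the `Sum.inr` symbol) in a term. -/
def Tm.countF {F : Type} {ar : F → ℕ} {k : ℕ} : Tm (F ⊕ Unit) (fAr ar k) → ℕ
  | .app (Sum.inl _) args => ∑ i, Tm.countF (args i)
  | .app (Sum.inr _) args => 1 + ∑ i, Tm.countF (args i)

/-- A literal: a (non-negated if `pos`, negated otherwise) equation between terms. -/
structure Lit (F : Type) (ar : F → ℕ) : Type where
  pos : Bool
  lhs : Tm F ar
  rhs : Tm F ar

def Lit.holds {F : Type} {ar : F → ℕ} (M : Str F ar) (l : Lit F ar) : Prop :=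
  if l.pos then l.lhs.eval M = l.rhs.eval M else l.lhs.eval M ≠ l.rhs.eval M

/-- A clause: a disjunction of (possibly negated) equations, ITE-free by construction. -/
abbrev Clause (F : Type) (ar : F → ℕ) := List (Lit F ar)

def Clause.holds {F : Type} {ar : F → ℕ} (M : Str F ar) (c : Clause F ar) : Prop :=
  ∃ l ∈ c, l.holds M

/-- A clause is valid if it holds in every nonempty structure. -/
def Clause.valid {F : Type} {ar : F → ℕ} (c : Clause F ar) : Prop :=
  ∀ M : Str F ar, c.holds M

/-- Number of occurrences of `f` in a literal (an equation). -/
def Lit.countF {F : Type} {ar : F → ℕ} {k : ℕ} (l : Lit (F ⊕ Unit) (fAr ar k)) : ℕ :=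
  l.lhs.countF + l.rhs.countF

/-- Case-1 regular clause: every equation has at most one occurrence of `f`,
and `f` occurs only in non-negated equations. -/
def Clause.Case1 {F : Type} {ar : F → ℕ} {k : ℕ} (c : Clause (F ⊕ Unit) (fAr ar k)) : Prop :=
  (∀ l ∈ c, l.countF ≤ 1) ∧ (∀ l ∈ c, l.pos = false → l.countF = 0)

/-- Case-2 regular clause: every equation has at most one occurrence of `f`, and `f`
occurs in exactly one negated equation of the clause and nowhere else. -/
def Clause.Case2 {F : Type} {ar : F → ℕ} {k : ℕ} (c : Clause (F ⊕ Unit) (fAr ar k)) : Prop :=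
  (∀ l ∈ c, l.countF ≤ 1) ∧ (∀ l ∈ c, l.pos = true → l.countF = 0) ∧
  (c.filter (fun l => l.pos = false ∧ l.countF ≠ 0)).length = 1

/-- A regular clause is one of case 1 or case 2. -/
def Clause.Regular {F : Type} {ar : F → ℕ} {k : ℕ} (c : Clause (F ⊕ Unit) (fAr ar k)) : Prop :=
  c.Case1 ∨ c.Case2

/-- Second-order substitution `·{w/f}` on literals. -/
def Lit.soSubst {F : Type} {ar : F → ℕ} {k : ℕ} (w : Tm (F ⊕ Fin k) (varAr ar k))
    (l : Lit (F ⊕ Unit) (fAr ar k)) : Lit F ar :=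
  ⟨l.pos, Tm.soSubst w l.lhs, Tm.soSubst w l.rhs⟩

/-- Second-order substitution `·{w/f}` on clauses. -/
def Clause.soSubst {F : Type} {ar : F → ℕ} {k : ℕ} (w : Tm (F ⊕ Fin k) (varAr ar k))
    (c : Clause (F ⊕ Unit) (fAr ar k)) : Clause F ar :=
  c.map (Lit.soSubst w)

/-- A regular-EUF formula: a finite conjunction of regular clauses. -/
structure RegEUF (F : Type) (ar : F → ℕ) (k : ℕ) : Type where
  clauses : List (Clause (F ⊕ Unit) (fAr ar k))
  regular : ∀ c ∈ clauses, c.Regular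

/-- `w` is a solution for a regular-EUF formula if every clause becomes valid
after substituting `w` for `f`. -/
def RegEUF.solves {F : Type} {ar : F → ℕ} {k : ℕ} (φ : RegEUF F ar k)
    (w : Tm (F ⊕ Fin k) (varAr ar k)) : Prop :=
  ∀ c ∈ φ.clauses, (c.soSubst w).valid

/-- Deterministic bottom-up tree automaton with a partial transition function. -/
structure DTA (F : Type) (ar : F → ℕ) : Type 1 where
  Q : Type
  [fintypeQ : Fintype Q]
  δ : (f : F) → (Fin (ar f) → Q) → Option Q
  final : Set Q

attribute [instance] DTA.fintypeQ

/-- Sequence a finite tuple of options. -/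
def finSeq {Q : Type} : {n : ℕ} → (Fin n → Option Q) → Option (Fin n → Q)
  | 0, _ => some (fun i => i.elim0)
  | _ + 1, f => (f 0).bind fun q => (finSeq fun i => f i.succ).map (Fin.cons q)

/-- The (partial) run of the automaton on a term: `δ` extended to terms. -/
def DTA.run {F : Type} {ar : F → ℕ} (A : DTA F ar) : Tm F ar → Option A.Q
  | .app f args => (finSeq fun i => A.run (args i)).bind fun qs => A.δ f qs

/-- The language accepted by the automaton. -/
def DTA.lang {F : Type} {ar : F → ℕ} (A : DTA F ar) : Set (Tm F ar) :=
  { t | ∃ q ∈ A.final, A.run t = some q }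

/-- A tree language is regular if it is the language of some deterministic
bottom-up tree automaton. -/
def IsRegularTreeLang {F : Type} {ar : F → ℕ} (L : Set (Tm F ar)) : Prop :=
  ∃ A : DTA F ar, L = A.lang

/-!
Write `ψ{w/f}` as `¬(E₀ ∧ U_w = B) ∨ P`, where `E₀`, `B` and the positive literals `P` are
`f`-free and `U_w` contains `w` once. Ground equational logic is convex, so `ψ{w/f}` is valid iff
`E₀ ∪ {U_w = B}` entails a literal of `P`: an equation between terms of the finite,
subterm-closed set `S` of `f`-free subterms. Whether `U_w` is `R`-equal to a given term of `S` is
read off the finite congruence-closure model of `R` on `S`, and there the value of `U_w` only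
depends on the values of `w` under all assignments of the variables. These finitely many values
fix the `S`-consequences of `E₀ ∪ {U_w = B}`: once `U_w` is provably equal to a term of `S` the
equation is one between terms of `S`, and as long as it is not, adding it is conservative over
`S`. A term's values in finitely many finite structures are computed bottom-up by an automaton.
-/

section Terms

variable {G : Type} {arG : G → ℕ}

def SubtermClosed (S : Set (Tm G arG)) : Prop :=
  ∀ ⦃g : G⦄ ⦃c : Fin (arG g) → Tm G arG⦄, Tm.app g c ∈ S → ∀ i, c i ∈ S

def Tm.subterms : Tm G arG → Set (Tm G arG)
  | .app g c => insert (.app g c) (⋃ i, (c i).subterms)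

theorem Tm.mem_subterms_self (t : Tm G arG) : t ∈ t.subterms := by
  cases t
  exact Set.mem_insert _ _

theorem Tm.finite_subterms (t : Tm G arG) : t.subterms.Finite := by
  induction t with
  | app g c ih => exact (Set.finite_iUnion ih).insert _

theorem Tm.subtermClosed_subterms (t : Tm G arG) : SubtermClosed t.subterms := by
  induction t with
  | app g c ih =>
    intro g' c' h i
    rcases h with h | h
    · cases h
      exact Set.mem_insert_of_mem _ (Set.mem_iUnion.2 ⟨i, (c i).mem_subterms_self⟩)
    · obtain ⟨j, hj⟩ := Set.mem_iUnion.1 h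
      exact Set.mem_insert_of_mem _ (Set.mem_iUnion.2 ⟨j, ih j hj i⟩)

theorem SubtermClosed.iUnion {ι : Sort*} {S : ι → Set (Tm G arG)}
    (hS : ∀ i, SubtermClosed (S i)) : SubtermClosed (⋃ i, S i) := by
  intro g c h j
  obtain ⟨i, hc⟩ := Set.mem_iUnion.1 h
  exact Set.mem_iUnion.2 ⟨i, hS i hc j⟩

theorem SubtermClosed.union {S S' : Set (Tm G arG)} (hS : SubtermClosed S)
    (hS' : SubtermClosed S') : SubtermClosed (S ∪ S') := by
  rintro g c (h | h) i
  exacts [Or.inl (hS h i), Or.inr (hS' h i)]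

def Tm.height : Tm G arG → ℕ
  | .app _ c => (Finset.univ.sup fun i => (c i).height) + 1

theorem Tm.height_lt_height_app {g : G} (c : Fin (arG g) → Tm G arG) (i : Fin (arG g)) :
    (c i).height < (Tm.app g c).height :=
  Nat.lt_succ_of_le (Finset.le_sup (f := fun i => (c i).height) (Finset.mem_univ i))

def Str.withVars {k : ℕ} (M : Str G arG) (ρ : Fin k → M.D) : Str (G ⊕ Fin k) (varAr arG k) where
  D := M.D
  interp
    | .inl g => M.interp g
    | .inr i => fun _ => ρ i

instance Str.finite_withVars {k : ℕ} (M : Str G arG) [Finite M.D] (ρ : Fin k → M.D) :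
    Finite (M.withVars ρ).D :=
  ‹Finite M.D›

theorem Tm.eval_instVars {k : ℕ} (M : Str G arG) (σ : Fin k → Tm G arG)
    (w : Tm (G ⊕ Fin k) (varAr arG k)) :
    (w.instVars σ).eval M = w.eval (M.withVars fun i => (σ i).eval M) := by
  induction w with
  | app s c ih =>
    cases s with
    | inl g => exact congrArg (M.interp g) (funext ih)
    | inr i => rfl

end Terms

section SecondOrderSubstitution

variable {F : Type} {ar : F → ℕ} {k : ℕ}

theorem Tm.soSubst_eq_of_countF_eq_zero {t : Tm (F ⊕ Unit) (fAr ar k)} (ht : t.countF = 0)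
    (w w' : Tm (F ⊕ Fin k) (varAr ar k)) : Tm.soSubst w t = Tm.soSubst w' t := by
  induction t with
  | app s c ih =>
    cases s with
    | inl g =>
      have hc : ∀ i, (c i).countF = 0 := fun i => Finset.sum_eq_zero_iff.1 ht i (Finset.mem_univ i)
      exact congrArg (Tm.app g) (funext fun i => ih i (hc i))
    | inr u => simp [Tm.countF] at ht

/-- Since `f` occurs at most once in `t`, `w` is instantiated in `t{w/f}` only at arguments
that do not themselves depend on `w`. -/
theorem Tm.eval_soSubst_eq_of_countF_le_one (M : Str F ar) {w w' : Tm (F ⊕ Fin k) (varAr ar k)}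
    (hw : ∀ ρ : Fin k → M.D, w.eval (M.withVars ρ) = w'.eval (M.withVars ρ))
    {t : Tm (F ⊕ Unit) (fAr ar k)} (ht : t.countF ≤ 1) :
    (Tm.soSubst w t).eval M = (Tm.soSubst w' t).eval M := by
  induction t with
  | app s c ih =>
    cases s with
    | inl g =>
      refine congrArg (M.interp g) (funext fun i => ih i (le_trans ?_ ht))
      exact Finset.single_le_sum (f := fun i => (c i).countF) (fun _ _ => Nat.zero_le _)
        (Finset.mem_univ i)
    | inr u =>
      have hsum : ∑ i, (c i).countF = 0 := by
        change 1 + ∑ i, (c i).countF ≤ 1 at ht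
        omega
      have hc : ∀ i, (c i).countF = 0 := fun i =>
        Finset.sum_eq_zero_iff.1 hsum i (Finset.mem_univ i)
      let σ : Fin k → Tm F ar := fun i => Tm.soSubst w (c i)
      have hσ : σ = fun i => Tm.soSubst w' (c i) :=
        funext fun i => Tm.soSubst_eq_of_countF_eq_zero (hc i) w w'
      change (w.instVars σ).eval M = (w'.instVars (fun i => Tm.soSubst w' (c i))).eval M
      rw [← hσ]
      exact (Tm.eval_instVars M σ w).trans ((hw _).trans (Tm.eval_instVars M σ w').symm)

end SecondOrderSubstitution

section EquationalConsequence

variable {G : Type} {arG : G → ℕ} {E E' : Set (Tm G arG × Tm G arG)} {s t u : Tm G arG}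

theorem EqCons.refl (E : Set (Tm G arG × Tm G arG)) (s : Tm G arG) : EqCons E s s :=
  fun _ _ => rfl

theorem EqCons.symm (h : EqCons E s t) : EqCons E t s := fun M hM => (h M hM).symm

theorem EqCons.trans (h : EqCons E s t) (h' : EqCons E t u) : EqCons E s u :=
  fun M hM => (h M hM).trans (h' M hM)

theorem EqCons.mono (hE : E ⊆ E') (h : EqCons E s t) : EqCons E' s t :=
  fun M hM => h M fun e he => hM e (hE he)

theorem EqCons.of_mem {e : Tm G arG × Tm G arG} (he : e ∈ E) : EqCons E e.1 e.2 :=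
  fun _ hM => hM e he

theorem EqCons.app {g : G} {a b : Fin (arG g) → Tm G arG} (h : ∀ i, EqCons E (a i) (b i)) :
    EqCons E (.app g a) (.app g b) :=
  fun M hM => congrArg (M.interp g) (funext fun i => h i M hM)

theorem EqCons.of_forall_mem (hE' : ∀ e ∈ E', EqCons E e.1 e.2) (h : EqCons E' s t) :
    EqCons E s t :=
  fun M hM => h M fun e he => hE' e he M hM

theorem eqCons_insert_swap {x y : Tm G arG} :
    EqCons (insert (x, y) E) s t ↔ EqCons (insert (y, x) E) s t := by
  have swap : ∀ x y : Tm G arG, EqCons (insert (x, y) E) s t → EqCons (insert (y, x) E) s t := by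
    refine fun x y h => h.of_forall_mem ?_
    rintro e (rfl | he)
    · exact (EqCons.of_mem (Set.mem_insert _ _)).symm
    · exact EqCons.of_mem (Set.mem_insert_of_mem _ he)
  exact ⟨swap x y, swap y x⟩

end EquationalConsequence

section CanonicalModel

variable {G : Type} {arG : G → ℕ} (S : Set (Tm G arG)) (E : Set (Tm G arG × Tm G arG))

def consSetoid : Setoid S where
  r s t := EqCons E s t
  iseqv := ⟨fun s => EqCons.refl E s, EqCons.symm, EqCons.trans⟩

abbrev Classes := Quotient (consSetoid S E)

open Classical in
/-- Congruence closure of `E` on `S`, read as a partial interpretation: `none` stands for all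
terms outside the `E`-classes of `S`. -/
noncomputable def canonInterp (g : G) (d : Fin (arG g) → Option (Classes S E)) :
    Option (Classes S E) :=
  if h : ∃ (s : S) (a : Fin (arG g) → S), s.1 = .app g (fun i => (a i).1) ∧
      d = fun i => some ⟦a i⟧
  then some ⟦h.choose⟧ else none

noncomputable def canon : Str G arG where
  D := Option (Classes S E)
  nonemptyD := ⟨none⟩
  interp := canonInterp S E

instance canon.finite [Finite S] : Finite (canon S E).D :=
  inferInstanceAs (Finite (Option (Classes S E)))

variable {S E}

theorem canonInterp_of_eq {g : G} {s : S} {a : Fin (arG g) → S}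
    (hs : s.1 = .app g fun i => (a i).1) :
    canonInterp S E g (fun i => some ⟦a i⟧) = some ⟦s⟧ := by
  have h : ∃ (s : S) (a' : Fin (arG g) → S), s.1 = .app g (fun i => (a' i).1) ∧
      (fun i => some ⟦a i⟧) = fun i => some (⟦a' i⟧ : Classes S E) := ⟨s, a, hs, rfl⟩
  rw [canonInterp, dif_pos h]
  obtain ⟨a', hs', hd⟩ := h.choose_spec
  refine congrArg some (Quotient.sound ?_)
  change EqCons E h.choose.1 s.1
  rw [hs', hs]
  exact EqCons.app fun i =>
    Quotient.exact (Option.some_injective _ (congrFun hd i)).symm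

theorem exists_of_canonInterp_eq_some {g : G} {d : Fin (arG g) → Option (Classes S E)}
    {q : Classes S E} (h : canonInterp S E g d = some q) :
    ∃ (s : S) (a : Fin (arG g) → S), s.1 = .app g (fun i => (a i).1) ∧
      d = (fun i => some ⟦a i⟧) ∧ q = ⟦s⟧ := by
  rw [canonInterp] at h
  split_ifs at h with hex
  obtain ⟨a, hs, hd⟩ := hex.choose_spec
  exact ⟨hex.choose, a, hs, hd, (Option.some_injective _ h).symm⟩

theorem Tm.eval_canon_app (g : G) (c : Fin (arG g) → Tm G arG) :
    (Tm.app g c).eval (canon S E) = canonInterp S E g fun i => (c i).eval (canon S E) :=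
  rfl

theorem Tm.eval_canon_of_mem (hS : SubtermClosed S) {t : Tm G arG} (ht : t ∈ S) :
    t.eval (canon S E) = some ⟦⟨t, ht⟩⟧ := by
  induction t with
  | app g c ih =>
    rw [Tm.eval_canon_app, funext fun i => ih i (hS ht i)]
    exact canonInterp_of_eq (a := fun i => ⟨c i, hS ht i⟩) rfl

theorem EqCons.of_eval_canon_eq_some {v : Tm G arG} {p : S}
    (h : v.eval (canon S E) = some ⟦p⟧) : EqCons E v p := by
  induction v generalizing p with
  | app g c ih =>
    obtain ⟨s, a, hs, hd, hp⟩ := exists_of_canonInterp_eq_some h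
    have hsp : EqCons E s p := (Quotient.exact hp).symm
    rw [hs] at hsp
    exact (EqCons.app fun i => ih i (congrFun hd i)).trans hsp

theorem canon_models (hS : SubtermClosed S) (hE : E ⊆ S ×ˢ S) :
    ∀ e ∈ E, e.1.eval (canon S E) = e.2.eval (canon S E) := by
  intro e he
  rw [Tm.eval_canon_of_mem hS (hE he).1, Tm.eval_canon_of_mem hS (hE he).2]
  exact congrArg some (Quotient.sound (EqCons.of_mem he))

theorem eval_canon_eq_some_iff (hS : SubtermClosed S) (hE : E ⊆ S ×ˢ S) {v : Tm G arG}
    {p : S} : v.eval (canon S E) = some ⟦p⟧ ↔ EqCons E v p :=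
  ⟨EqCons.of_eval_canon_eq_some, fun h =>
    (h _ (canon_models hS hE)).trans (Tm.eval_canon_of_mem hS p.2)⟩

end CanonicalModel

section ClauseValidity

variable {G : Type} {arG : G → ℕ}

def Clause.negEqs (c : Clause G arG) : Set (Tm G arG × Tm G arG) :=
  {e | ∃ l ∈ c, l.pos = false ∧ e = (l.lhs, l.rhs)}

/-- Convexity of ground equational logic; the canonical model of the negated equations over all
terms refutes every positive literal they do not entail. -/
theorem Clause.valid_iff (c : Clause G arG) :
    c.valid ↔ ∃ l ∈ c, l.pos = true ∧ EqCons c.negEqs l.lhs l.rhs := by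
  have hS : SubtermClosed (Set.univ : Set (Tm G arG)) := fun _ _ _ _ => trivial
  constructor
  · intro hc
    obtain ⟨l, hl, hholds⟩ := hc (canon Set.univ c.negEqs)
    cases hpos : l.pos
    · have hneg : (l.lhs, l.rhs) ∈ c.negEqs := ⟨l, hl, hpos, rfl⟩
      simp only [Lit.holds, hpos] at hholds
      exact absurd (canon_models hS (fun _ _ => ⟨trivial, trivial⟩) _ hneg) hholds
    · simp only [Lit.holds, hpos, if_true, Tm.eval_canon_of_mem hS (Set.mem_univ _)] at hholds
      exact ⟨l, hl, hpos, Quotient.exact (Option.some_injective _ hholds)⟩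
  · rintro ⟨l, hl, hpos, hcons⟩ M
    by_cases hM : ∀ e ∈ c.negEqs, e.1.eval M = e.2.eval M
    · exact ⟨l, hl, by simpa only [Lit.holds, hpos, if_true] using hcons M hM⟩
    · push Not at hM
      obtain ⟨_, ⟨l', hl', hneg, rfl⟩, hne⟩ := hM
      exact ⟨l', hl', by simpa only [Lit.holds, hneg, Bool.false_eq_true, if_false] using hne⟩

end ClauseValidity

section Conservativity

variable {G : Type} {arG : G → ℕ} {S : Set (Tm G arG)} {E : Set (Tm G arG × Tm G arG)}

noncomputable def Classes.rep (q : Classes S E) : Tm G arG := q.out.1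

theorem Classes.rep_injective : Function.Injective (Classes.rep (S := S) (E := E)) :=
  fun _ _ h => Quotient.out_inj.1 (Subtype.ext h)

variable (S E)

noncomputable def canonNorm (t : Tm G arG) : Tm G arG :=
  (t.eval (canon S E)).elim t Classes.rep

noncomputable def canonNf : Tm G arG → Tm G arG
  | .app g c => .app g fun i => canonNorm S E (canonNf (c i))

open Classical in
/-- A term model of `insert (U, B) E` that keeps the classes of `S` apart: normal forms, with the
normal form of `U` glued to `B`. -/
noncomputable def glueModel (U B : Tm G arG) : Str G arG where
  D := Tm G arG
  nonemptyD := ⟨U⟩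
  interp g d := if Tm.app g d = canonNf S E U then canonNorm S E B else canonNorm S E (.app g d)

variable {S E}

theorem canonNorm_of_eval_eq_some {t : Tm G arG} {q : Classes S E}
    (h : t.eval (canon S E) = some q) : canonNorm S E t = q.rep := by
  rw [canonNorm, h]
  rfl

theorem canonNorm_of_eval_eq_none {t : Tm G arG} (h : t.eval (canon S E) = none) :
    canonNorm S E t = t := by
  rw [canonNorm, h]
  rfl

theorem Classes.eval_rep (hS : SubtermClosed S) (q : Classes S E) :
    q.rep.eval (canon S E) = some q := by
  rw [Classes.rep, Tm.eval_canon_of_mem hS q.out.2, Subtype.coe_eta, Quotient.out_eq]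

theorem eval_canonNorm (hS : SubtermClosed S) (t : Tm G arG) :
    (canonNorm S E t).eval (canon S E) = t.eval (canon S E) := by
  cases h : t.eval (canon S E) with
  | none => rw [canonNorm_of_eval_eq_none h, h]
  | some q => rw [canonNorm_of_eval_eq_some h, Classes.eval_rep hS]

theorem eval_canonNf (hS : SubtermClosed S) (v : Tm G arG) :
    (canonNf S E v).eval (canon S E) = v.eval (canon S E) := by
  induction v with
  | app g c ih =>
    change canonInterp S E g (fun i => (canonNorm S E (canonNf S E (c i))).eval (canon S E)) = _
    simp only [eval_canonNorm hS, ih]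
    rfl

theorem eval_canon_ne_none_of_app {g : G} {c : Fin (arG g) → Tm G arG}
    (h : (Tm.app g c).eval (canon S E) ≠ none) (i : Fin (arG g)) :
    (c i).eval (canon S E) ≠ none := by
  obtain ⟨q, hq⟩ := Option.ne_none_iff_exists'.1 h
  obtain ⟨_, a, _, hd, _⟩ := exists_of_canonInterp_eq_some hq
  rw [congrFun hd i]
  exact Option.some_ne_none _

/-- Undefined subterms keep their place in the normal form, so they get strictly lower normal
forms; this is what keeps the gluing at `U` from firing below `U`. -/
theorem height_canonNf_lt (hS : SubtermClosed S) {g : G} {c : Fin (arG g) → Tm G arG}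
    {i : Fin (arG g)} (hi : (c i).eval (canon S E) = none) :
    (canonNf S E (c i)).height < (canonNf S E (.app g c)).height := by
  have h := Tm.height_lt_height_app (fun j => canonNorm S E (canonNf S E (c j))) i
  rwa [canonNorm_of_eval_eq_none ((eval_canonNf hS _).trans hi)] at h

theorem eval_glueModel_app_of_ne {U B : Tm G arG} {g : G} {c : Fin (arG g) → Tm G arG}
    (h : Tm.app g (fun i => (c i).eval (glueModel S E U B)) ≠ canonNf S E U) :
    (Tm.app g c).eval (glueModel S E U B) =
      canonNorm S E (.app g fun i => (c i).eval (glueModel S E U B)) :=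
  if_neg h

theorem eval_glueModel_app_of_eq {U B : Tm G arG} {g : G} {c : Fin (arG g) → Tm G arG}
    (h : Tm.app g (fun i => (c i).eval (glueModel S E U B)) = canonNf S E U) :
    (Tm.app g c).eval (glueModel S E U B) = canonNorm S E B :=
  if_pos h

theorem eval_glueModel (hS : SubtermClosed S) {U : Tm G arG} (B : Tm G arG)
    (hU : U.eval (canon S E) = none) {v : Tm G arG}
    (hv : v.eval (canon S E) ≠ none ∨ (canonNf S E v).height < (canonNf S E U).height) :
    v.eval (glueModel S E U B) = canonNorm S E (canonNf S E v) := by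
  induction v with
  | app g c ih =>
    have hc : ∀ i, (c i).eval (glueModel S E U B) = canonNorm S E (canonNf S E (c i)) := by
      intro i
      refine ih i ?_
      by_cases hi : (c i).eval (canon S E) = none
      · rcases hv with hv | hv
        · exact absurd hi (eval_canon_ne_none_of_app hv i)
        · exact Or.inr ((height_canonNf_lt hS hi).trans hv)
      · exact Or.inl hi
    have hne : canonNf S E (.app g c) ≠ canonNf S E U := by
      rcases hv with hv | hv
      · intro h
        apply hv
        rw [← eval_canonNf hS, h, eval_canonNf hS, hU]
      · exact fun h => (h ▸ hv).false
    rw [eval_glueModel_app_of_ne (by rwa [funext hc]), funext hc]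
    rfl

theorem eval_glueModel_self (hS : SubtermClosed S) {U : Tm G arG} (B : Tm G arG)
    (hU : U.eval (canon S E) = none) :
    U.eval (glueModel S E U B) = canonNorm S E B := by
  obtain ⟨g, c⟩ := U
  refine eval_glueModel_app_of_eq ?_
  have hc : ∀ i, (c i).eval (glueModel S E (.app g c) B) = canonNorm S E (canonNf S E (c i)) := by
    intro i
    refine eval_glueModel hS B hU ?_
    by_cases hi : (c i).eval (canon S E) = none
    · exact Or.inr (height_canonNf_lt hS hi)
    · exact Or.inl hi
  rw [funext hc]
  rfl

theorem eval_glueModel_of_mem (hS : SubtermClosed S) {U : Tm G arG} (B : Tm G arG)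
    (hU : U.eval (canon S E) = none) {t : Tm G arG} (ht : t ∈ S) :
    t.eval (glueModel S E U B) = Classes.rep (⟦⟨t, ht⟩⟧ : Classes S E) := by
  have hval := Tm.eval_canon_of_mem (E := E) hS ht
  rw [eval_glueModel hS B hU (Or.inl (hval ▸ Option.some_ne_none _)),
    canonNorm_of_eval_eq_some ((eval_canonNf hS t).trans hval)]

theorem EqCons.of_insert (hS : SubtermClosed S) (hE : E ⊆ S ×ˢ S) {U B : Tm G arG}
    (hB : B ∈ S) (hU : ∀ p ∈ S, ¬ EqCons E U p) {s t : Tm G arG} (hs : s ∈ S) (ht : t ∈ S)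
    (h : EqCons (insert (U, B) E) s t) : EqCons E s t := by
  have hUnone : U.eval (canon S E) = none := by
    cases hq : U.eval (canon S E) with
    | none => rfl
    | some q =>
      rw [← Quotient.out_eq q] at hq
      exact absurd (EqCons.of_eval_canon_eq_some hq) (hU _ q.out.2)
  have hmodel : ∀ e ∈ insert (U, B) E,
      e.1.eval (glueModel S E U B) = e.2.eval (glueModel S E U B) := by
    rintro e (rfl | he)
    · rw [eval_glueModel_self hS B hUnone, eval_glueModel_of_mem hS B hUnone hB,
        canonNorm_of_eval_eq_some (Tm.eval_canon_of_mem hS hB)]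
    · rw [eval_glueModel_of_mem hS B hUnone (hE he).1, eval_glueModel_of_mem hS B hUnone (hE he).2]
      exact congrArg _ (Quotient.sound (EqCons.of_mem he))
  have hst := h _ hmodel
  rw [eval_glueModel_of_mem hS B hUnone hs, eval_glueModel_of_mem hS B hUnone ht] at hst
  exact Quotient.exact (Classes.rep_injective hst)

end Conservativity

section SameType

variable {G : Type} {arG : G → ℕ} {S : Set (Tm G arG)}

/-- Let `T` be the theory of `S`-consequences of `E₀ ∪ {U₂ = B}`. If `U₂` is `T`-equal to some
`p ∈ S`, so is `U₁`, and `p = B` is in `T`; otherwise neither is, and `U₁ = B` is conservative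
over `T`. -/
theorem EqCons.insert_of_eval_canon_eq (hS : SubtermClosed S) {E₀ : Set (Tm G arG × Tm G arG)}
    (hE₀ : E₀ ⊆ S ×ˢ S) {U₁ U₂ B : Tm G arG} (hB : B ∈ S)
    (hU : ∀ R ⊆ S ×ˢ S, U₁.eval (canon S R) = U₂.eval (canon S R)) {s t : Tm G arG}
    (hs : s ∈ S) (ht : t ∈ S) (h : EqCons (insert (U₁, B) E₀) s t) :
    EqCons (insert (U₂, B) E₀) s t := by
  set T : Set (Tm G arG × Tm G arG) :=
    {e | e ∈ S ×ˢ S ∧ EqCons (insert (U₂, B) E₀) e.1 e.2}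
  have hTS : T ⊆ S ×ˢ S := fun _ he => he.1
  have hT {x y : Tm G arG} (hxy : EqCons T x y) : EqCons (insert (U₂, B) E₀) x y :=
    hxy.of_forall_mem fun _ he => he.2
  have hE₀T : E₀ ⊆ T := fun e he => ⟨hE₀ he, EqCons.of_mem (Set.mem_insert_of_mem _ he)⟩
  have hUT : ∀ p : S, EqCons T U₁ p ↔ EqCons T U₂ p := fun p => by
    rw [← eval_canon_eq_some_iff hS hTS, ← eval_canon_eq_some_iff hS hTS, hU T hTS]
  suffices EqCons T s t from hT this
  by_cases hp : ∃ p : S, EqCons T U₂ p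
  · obtain ⟨p, hU₂p⟩ := hp
    have hpB : EqCons T p B := EqCons.of_mem (E := T) (e := (p.1, B))
      ⟨⟨p.2, hB⟩, (hT hU₂p).symm.trans (EqCons.of_mem (Set.mem_insert _ _))⟩
    refine h.of_forall_mem ?_
    rintro e (rfl | he)
    · exact ((hUT p).2 hU₂p).trans hpB
    · exact EqCons.of_mem (hE₀T he)
  · refine EqCons.of_insert hS hTS hB (fun p hp' hU₁p => hp ⟨⟨p, hp'⟩, ?_⟩) hs ht
      (h.mono (Set.insert_subset_insert hE₀T))
    exact (hUT ⟨p, hp'⟩).1 hU₁p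

end SameType

section Regularity

variable {G : Type} {arG : G → ℕ}

theorem finSeq_some {Q : Type} : ∀ {n : ℕ} (f : Fin n → Q), finSeq (fun i => some (f i)) = some f
  | 0, f => congrArg some (funext fun i => i.elim0)
  | n + 1, f => by
    change Option.map (Fin.cons (f 0)) (finSeq fun i : Fin n => some (f i.succ)) = some f
    rw [finSeq_some fun i => f i.succ, Option.map_some]
    exact congrArg some (Fin.cons_self_tail f)

theorem isRegularTreeLang_of_eval_eq {ι : Type} [Finite ι] (M : ι → Str G arG)
    [∀ i, Finite (M i).D] (L : Set (Tm G arG))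
    (hL : ∀ s t, (∀ i, s.eval (M i) = t.eval (M i)) → s ∈ L → t ∈ L) :
    IsRegularTreeLang L := by
  let A : DTA G arG :=
    { Q := ∀ i, (M i).D
      fintypeQ := Fintype.ofFinite _
      δ := fun g qs => some fun i => (M i).interp g fun j => qs j i
      final := {q | ∃ t ∈ L, q = fun i => t.eval (M i)} }
  have hrun : ∀ t, A.run t = some fun i => t.eval (M i) := by
    intro t
    induction t with
    | app g c ih =>
      change (finSeq fun j => A.run (c j)).bind (A.δ g) = _
      rw [funext ih, finSeq_some]
      rfl
  refine ⟨A, Set.ext fun t => ⟨fun ht => ⟨_, ⟨t, ht, rfl⟩, hrun t⟩, ?_⟩⟩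
  rintro ⟨q, ⟨s, hs, rfl⟩, hq⟩
  rw [hrun] at hq
  exact hL s t (fun i => congrFun (Option.some_injective _ hq).symm i) hs

end Regularity

section Case2

variable {F : Type} {ar : F → ℕ} {k : ℕ} {ψ : Clause (F ⊕ Unit) (fAr ar k)}

theorem Lit.soSubst_eq_of_countF_eq_zero {l : Lit (F ⊕ Unit) (fAr ar k)} (hl : l.countF = 0)
    (w w' : Tm (F ⊕ Fin k) (varAr ar k)) : l.soSubst w = l.soSubst w' := by
  obtain ⟨hlhs, hrhs⟩ := Nat.add_eq_zero_iff.1 hl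
  rw [Lit.soSubst, Lit.soSubst, Tm.soSubst_eq_of_countF_eq_zero hlhs w w',
    Tm.soSubst_eq_of_countF_eq_zero hrhs w w']

theorem Clause.Case2.exists_lit (hψ : ψ.Case2) :
    ∃ l ∈ ψ, l.pos = false ∧ l.countF = 1 ∧
      ∀ l' ∈ ψ, l'.pos = false → l'.countF ≠ 0 → l' = l := by
  obtain ⟨hle, -, hlen⟩ := hψ
  obtain ⟨l, hl⟩ := List.length_eq_one_iff.1 hlen
  have hfilter : ∀ l', (l' ∈ ψ ∧ decide (l'.pos = false ∧ l'.countF ≠ 0) = true) ↔ l' = l :=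
    fun l' => List.mem_filter.symm.trans (hl ▸ List.mem_singleton)
  obtain ⟨hmem, hpred⟩ := (hfilter l).2 rfl
  rw [decide_eq_true_eq] at hpred
  refine ⟨l, hmem, hpred.1, by have := hle l hmem; omega, fun l' hl' hneg hc => ?_⟩
  exact (hfilter l').1 ⟨hl', decide_eq_true ⟨hneg, hc⟩⟩

theorem Clause.negEqs_soSubst_eq_insert {l₀ : Lit (F ⊕ Unit) (fAr ar k)} (hl₀ : l₀ ∈ ψ)
    (hneg₀ : l₀.pos = false) (huniq : ∀ l ∈ ψ, l.pos = false → l.countF ≠ 0 → l = l₀)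
    (w w₀ : Tm (F ⊕ Fin k) (varAr ar k)) :
    (ψ.soSubst w).negEqs = insert ((l₀.soSubst w).lhs, (l₀.soSubst w).rhs)
      (Clause.soSubst w₀ (ψ.filter fun l : Lit (F ⊕ Unit) (fAr ar k) => l.countF = 0)).negEqs := by
  ext e
  simp only [Clause.negEqs, Clause.soSubst, List.mem_map, List.mem_filter, decide_eq_true_eq,
    Set.mem_insert_iff, Set.mem_ofPred_eq]
  constructor
  · rintro ⟨_, ⟨l, hl, rfl⟩, hneg, rfl⟩
    by_cases hc : l.countF = 0
    · exact Or.inr ⟨l.soSubst w₀, ⟨l, ⟨hl, hc⟩, rfl⟩, hneg,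
        by rw [Lit.soSubst_eq_of_countF_eq_zero hc w w₀]⟩
    · exact Or.inl (by rw [huniq l hl hneg hc])
  · rintro (rfl | ⟨_, ⟨l, ⟨hl, hc⟩, rfl⟩, hneg, rfl⟩)
    · exact ⟨l₀.soSubst w, ⟨l₀, hl₀, rfl⟩, hneg₀, rfl⟩
    · exact ⟨l.soSubst w, ⟨l, hl, rfl⟩, hneg, by rw [Lit.soSubst_eq_of_countF_eq_zero hc w w₀]⟩

theorem EqCons.insert_soSubst_of_eval_canon_eq {S : Set (Tm F ar)} (hS : SubtermClosed S)
    {E₀ : Set (Tm F ar × Tm F ar)} (hE₀ : E₀ ⊆ S ×ˢ S) {l₀ : Lit (F ⊕ Unit) (fAr ar k)}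
    (hl₀ : l₀.countF = 1) {w₀ w₁ w₂ : Tm (F ⊕ Fin k) (varAr ar k)}
    (hS₀ : (l₀.soSubst w₀).lhs ∈ S ∧ (l₀.soSubst w₀).rhs ∈ S)
    (hw : ∀ t : Tm (F ⊕ Unit) (fAr ar k), t.countF ≤ 1 → ∀ R ⊆ S ×ˢ S,
      (Tm.soSubst w₁ t).eval (canon S R) = (Tm.soSubst w₂ t).eval (canon S R))
    {s t : Tm F ar} (hs : s ∈ S) (ht : t ∈ S)
    (h : EqCons (insert ((l₀.soSubst w₁).lhs, (l₀.soSubst w₁).rhs) E₀) s t) :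
    EqCons (insert ((l₀.soSubst w₂).lhs, (l₀.soSubst w₂).rhs) E₀) s t := by
  change l₀.lhs.countF + l₀.rhs.countF = 1 at hl₀
  change EqCons (insert (Tm.soSubst w₁ l₀.lhs, Tm.soSubst w₁ l₀.rhs) E₀) s t at h
  change EqCons (insert (Tm.soSubst w₂ l₀.lhs, Tm.soSubst w₂ l₀.rhs) E₀) s t
  by_cases hlhs : l₀.lhs.countF = 0
  · rw [Tm.soSubst_eq_of_countF_eq_zero hlhs w₁ w₀, eqCons_insert_swap] at h
    rw [Tm.soSubst_eq_of_countF_eq_zero hlhs w₂ w₀, eqCons_insert_swap]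
    exact h.insert_of_eval_canon_eq hS hE₀ hS₀.1 (hw _ (by omega)) hs ht
  · have hrhs : l₀.rhs.countF = 0 := by omega
    rw [Tm.soSubst_eq_of_countF_eq_zero hrhs w₁ w₀] at h
    rw [Tm.soSubst_eq_of_countF_eq_zero hrhs w₂ w₀]
    exact h.insert_of_eval_canon_eq hS hE₀ hS₀.2 (hw _ (by omega)) hs ht

theorem Clause.Case2.valid_soSubst_of_eval_canon_eq (hψ : ψ.Case2) {S : Set (Tm F ar)}
    (hS : SubtermClosed S) {w₀ w₁ w₂ : Tm (F ⊕ Fin k) (varAr ar k)}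
    (hS₀ : ∀ l ∈ ψ, (l.soSubst w₀).lhs ∈ S ∧ (l.soSubst w₀).rhs ∈ S)
    (hw : ∀ R ⊆ S ×ˢ S, ∀ ρ : Fin k → (canon S R).D,
      w₁.eval ((canon S R).withVars ρ) = w₂.eval ((canon S R).withVars ρ))
    (h : (ψ.soSubst w₁).valid) : (ψ.soSubst w₂).valid := by
  obtain ⟨l₀, hl₀, hneg₀, hcount₀, huniq⟩ := hψ.exists_lit
  have hE₀ : (Clause.soSubst w₀
      (ψ.filter fun l : Lit (F ⊕ Unit) (fAr ar k) => l.countF = 0)).negEqs ⊆ S ×ˢ S := by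
    rintro _ ⟨_, hl', -, rfl⟩
    obtain ⟨l, hl, rfl⟩ := List.mem_map.1 hl'
    exact hS₀ l (List.mem_of_mem_filter hl)
  rw [Clause.valid_iff] at h ⊢
  obtain ⟨_, hl', hpos, hcons⟩ := h
  obtain ⟨l, hl, rfl⟩ := List.mem_map.1 hl'
  have hfree := Lit.soSubst_eq_of_countF_eq_zero (hψ.2.1 l hl hpos)
  refine ⟨l.soSubst w₂, List.mem_map_of_mem hl, hpos, ?_⟩
  rw [hfree w₁ w₀, Clause.negEqs_soSubst_eq_insert hl₀ hneg₀ huniq w₁ w₀] at hcons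
  rw [hfree w₂ w₀, Clause.negEqs_soSubst_eq_insert hl₀ hneg₀ huniq w₂ w₀]
  exact hcons.insert_soSubst_of_eval_canon_eq hS hE₀ hcount₀ (hS₀ l₀ hl₀)
    (fun t ht R hR => Tm.eval_soSubst_eq_of_countF_le_one _ (hw R hR) ht) (hS₀ l hl).1 (hS₀ l hl).2

end Case2

theorem case2_solutions_regular_general {F : Type} (ar : F → ℕ) (k : ℕ)
    (ψ : Clause (F ⊕ Unit) (fAr ar k)) (hψ : ψ.Case2) :
    IsRegularTreeLang {w : Tm (F ⊕ Fin k) (varAr ar k) | (ψ.soSubst w).valid} := by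
  obtain hempty | ⟨⟨w₀⟩⟩ := isEmpty_or_nonempty (Tm (F ⊕ Fin k) (varAr ar k))
  · exact ⟨{ Q := Empty, δ := fun _ _ => none, final := ∅ }, Set.ext isEmptyElim⟩
  let S : Set (Tm F ar) :=
    ⋃ l ∈ ψ, (Tm.soSubst w₀ l.lhs).subterms ∪ (Tm.soSubst w₀ l.rhs).subterms
  have hS : SubtermClosed S := SubtermClosed.iUnion fun l => SubtermClosed.iUnion fun _ =>
    (Tm.subtermClosed_subterms _).union (Tm.subtermClosed_subterms _)
  have : Finite S := Set.Finite.to_subtype <|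
    (List.finite_toSet ψ).biUnion fun l _ => (Tm.finite_subterms _).union (Tm.finite_subterms _)
  have : Finite {R : Set (Tm F ar × Tm F ar) | R ⊆ S ×ˢ S} :=
    ((Set.toFinite S).prod (Set.toFinite S)).finite_subsets.to_subtype
  refine isRegularTreeLang_of_eval_eq
    (ι := Σ R : {R : Set (Tm F ar × Tm F ar) | R ⊆ S ×ˢ S}, Fin k → (canon S R.1).D)
    (fun i => (canon S i.1.1).withVars i.2) _ fun w₁ w₂ hw h =>
      hψ.valid_soSubst_of_eval_canon_eq hS (w₀ := w₀) ?_ (fun R hR ρ => hw ⟨⟨R, hR⟩, ρ⟩) h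
  exact fun l hl => ⟨Set.mem_biUnion hl (Or.inl (Tm.mem_subterms_self _)),
    Set.mem_biUnion hl (Or.inr (Tm.mem_subterms_self _))⟩

/-- For a finite signature `Σ = (F, ar)`, a fresh function symbol `f`
of arity `k`, and a case-2 regular clause (each equation contains at most one occurrence of `f`, and `f` occurs in exactly one negated equation of the clause and nowhere else), the set of candidate expressions
`w ∈ T(Σ, {x₁,…,x_k})` such that `ψ{w/f}` is valid is a regular tree language over
`Σ ∪ {x₁,…,x_k}` (with the variables treated as constants). -/
theorem case2_solutions_regular {F : Type} [Fintype F] (ar : F → ℕ) (k : ℕ)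
    (ψ : Clause (F ⊕ Unit) (fAr ar k)) (hψ : ψ.Case2) :
    IsRegularTreeLang {w : Tm (F ⊕ Fin k) (varAr ar k) | (ψ.soSubst w).valid} :=
  case2_solutions_regular_general ar k ψ hψ

end SyGuS
end

section
/- For every finite family L1,…,Ln of regular tree languages over a finite signature Σ, there exist an extension Σ′ of Σ by finitely many fresh constants and a regular-EUF formula φ over Σ′ ∪ {f}, with f a nullary function symbol, such that {w ∈ T(Σ) : φ{w/f} is valid} = L1 ∩ … ∩ Ln. In particular, the SyGuS problem (φ, G, f) where G is a regular tree grammar with L(G) = T(Σ) has a solution if and only if L1 ∩ … ∩ Ln ≠ ∅. -/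
namespace SyGuS

/-- Regular tree grammars: finitely many productions rewriting a nonterminal `A` into
`g(t₁,…,t_k)`, where each `tᵢ` is a nonterminal or a ground term. -/
structure RTG (F : Type) (ar : F → ℕ) : Type 1 where
  N : Type
  [fintypeN : Fintype N]
  start : N
  prods : Set (N × Σ g : F, (Fin (ar g) → N ⊕ Tm F ar))
  finite_prods : prods.Finite

attribute [instance] RTG.fintypeN

/-- Derivability of a term from a nonterminal of the grammar. -/
inductive RTG.Derives {F : Type} {ar : F → ℕ} (G : RTG F ar) : G.N → Tm F ar → Prop
  | step (A : G.N) (g : F) (args : Fin (ar g) → G.N ⊕ Tm F ar) (ts : Fin (ar g) → Tm F ar)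
      (h : (A, ⟨g, args⟩) ∈ G.prods)
      (hnt : ∀ i B, args i = Sum.inl B → G.Derives B (ts i))
      (htm : ∀ i u, args i = Sum.inr u → ts i = u) :
      G.Derives A (.app g ts)

/-- The language of a regular tree grammar: terms derivable from the start symbol. -/
def RTG.lang {F : Type} {ar : F → ℕ} (G : RTG F ar) : Set (Tm F ar) :=
  { t | G.Derives G.start t }

/-- Embedding of ground `Σ`-terms into the candidate expressions (for a nullary `f`)
over the extension `Σ ∪ {c₁,…,c_c}` of `Σ` by `c` fresh constants. -/
def embedG {F : Type} {ar : F → ℕ} {c : ℕ} :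
    Tm F ar → Tm ((F ⊕ Fin c) ⊕ Fin 0) (varAr (Sum.elim ar fun _ => 0) 0) :=
  Tm.rename (fun g => Sum.inl (Sum.inl g)) (fun _ => rfl)

/-!
Give each state `q` of an automaton `A` a fresh constant `c_q` and encode `A` by the case-1 clause
`⋁_{δ(g, q₁,…,q_k) = q} g(c_{q₁},…,c_{q_k}) ≠ c_q  ∨  ⋁_{q final} f = c_q`.
In a structure where every transition equation holds, induction shows that a term `w` with
`δ(w) = q` evaluates like `c_q`, so the clause holds under `{w/f}` whenever `w ∈ L(A)`.
Conversely, interpreting each `g` by `δ` on `Option Q` and `c_q` by `q` makes every transition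
equation true and evaluates `w` to `δ(w)`, so validity of the clause forces `w ∈ L(A)`.
The conjunction of these clauses for `L₁,…,L_n`, over pairwise distinct constants, is `φ`.
-/

theorem finSeq_eq_some_iff {Q : Type} : ∀ {n : ℕ} {f : Fin n → Option Q} {v : Fin n → Q},
    finSeq f = some v ↔ ∀ i, f i = some (v i)
  | 0, _, v => by simpa [finSeq] using Subsingleton.elim _ v
  | n + 1, f, v => by
    simp only [finSeq, Option.bind_eq_some_iff, Option.map_eq_some_iff, finSeq_eq_some_iff]
    constructor
    · rintro ⟨q, hq, vt, hvt, rfl⟩ i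
      refine Fin.cases ?_ (fun j => ?_) i <;> simp [hq, hvt]
    · intro h
      exact ⟨v 0, h 0, Fin.tail v, fun i => h i.succ, Fin.cons_self_tail v⟩

section Encoding

variable {F : Type} {ar : F → ℕ} {c : ℕ}

def embed : Tm F ar → Tm (F ⊕ Fin c) (Sum.elim ar fun _ => 0) :=
  Tm.rename Sum.inl fun _ => rfl

def freshConst (j : Fin c) : Tm (F ⊕ Fin c) (Sum.elim ar fun _ => 0) :=
  .app (Sum.inr j) Fin.elim0

def freshConstF (j : Fin c) : Tm ((F ⊕ Fin c) ⊕ Unit) (fAr (Sum.elim ar fun _ => 0) 0) :=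
  .app (Sum.inl (Sum.inr j)) Fin.elim0

def fConst : Tm ((F ⊕ Fin c) ⊕ Unit) (fAr (Sum.elim ar fun _ => 0) 0) :=
  .app (Sum.inr ()) Fin.elim0

theorem soSubst_freshConstF (w : Tm ((F ⊕ Fin c) ⊕ Fin 0) (varAr (Sum.elim ar fun _ => 0) 0))
    (j : Fin c) : Tm.soSubst w (freshConstF j) = freshConst j :=
  congrArg (Tm.app _) (funext fun i => i.elim0)

theorem instVars_embedG (σ : Fin 0 → Tm (F ⊕ Fin c) (Sum.elim ar fun _ => 0)) (t : Tm F ar) :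
    (embedG t).instVars σ = embed t := by
  induction t with
  | app g args ih =>
    simp only [embedG, embed, Tm.rename, Tm.instVars] at ih ⊢
    exact congrArg _ (funext ih)

theorem soSubst_embedG_fConst (v : Tm F ar) : Tm.soSubst (embedG v) (fConst (c := c)) = embed v :=
  instVars_embedG _ v

theorem countF_freshConstF (j : Fin c) : (freshConstF (ar := ar) j).countF = 0 := by
  simp [freshConstF, Tm.countF]

theorem countF_fConst : (fConst (ar := ar) (c := c)).countF = 1 := by
  simp [fConst, Tm.countF]

section Literals

variable {Q : Type} (ι : Q → Fin c)

def transLit (g : F) (qs : Fin (ar g) → Q) (q : Q) :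
    Lit ((F ⊕ Fin c) ⊕ Unit) (fAr (Sum.elim ar fun _ => 0) 0) :=
  ⟨false, .app (Sum.inl (Sum.inl g)) fun j => freshConstF (ι (qs j)), freshConstF (ι q)⟩

def finalLit (q : Q) : Lit ((F ⊕ Fin c) ⊕ Unit) (fAr (Sum.elim ar fun _ => 0) 0) :=
  ⟨true, fConst, freshConstF (ι q)⟩

theorem holds_soSubst_transLit (M : Str (F ⊕ Fin c) (Sum.elim ar fun _ => 0))
    (w : Tm ((F ⊕ Fin c) ⊕ Fin 0) (varAr (Sum.elim ar fun _ => 0) 0))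
    (g : F) (qs : Fin (ar g) → Q) (q : Q) :
    ((transLit ι g qs q).soSubst w).holds M ↔
      M.interp (Sum.inl g) (fun j => (freshConst (ι (qs j))).eval M) ≠
        (freshConst (ι q)).eval M := by
  simp [Lit.holds, Lit.soSubst, transLit, Tm.soSubst, soSubst_freshConstF, Tm.eval]

theorem holds_soSubst_finalLit (M : Str (F ⊕ Fin c) (Sum.elim ar fun _ => 0)) (v : Tm F ar)
    (q : Q) :
    ((finalLit ι q).soSubst (embedG v)).holds M ↔
      (embed v).eval M = (freshConst (ι q)).eval M := by
  simp [Lit.holds, Lit.soSubst, finalLit, soSubst_freshConstF, soSubst_embedG_fConst]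

end Literals

section AutomatonClause

variable (A : DTA F ar) (ι : A.Q → Fin c)

theorem eval_embed_of_run (M : Str (F ⊕ Fin c) (Sum.elim ar fun _ => 0))
    (hM : ∀ g qs q, A.δ g qs = some q →
      M.interp (Sum.inl g) (fun j => (freshConst (ι (qs j))).eval M) = (freshConst (ι q)).eval M)
    (t : Tm F ar) {q : A.Q} (ht : A.run t = some q) :
    (embed t).eval M = (freshConst (ι q)).eval M := by
  induction t generalizing q with
  | app g args ih =>
    obtain ⟨qs, hqs, hδ⟩ := Option.bind_eq_some_iff.mp ht
    rw [finSeq_eq_some_iff] at hqs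
    calc (embed (.app g args)).eval M
        = M.interp (Sum.inl g) (fun j => (embed (args j)).eval M) := rfl
      _ = M.interp (Sum.inl g) (fun j => (freshConst (ι (qs j))).eval M) := by
        congr 1; exact funext fun j => ih j (hqs j)
      _ = (freshConst (ι q)).eval M := hM g qs q hδ

/-- `none` stands for an undefined run. -/
def runStr (ρ : Fin c → Option A.Q) : Str (F ⊕ Fin c) (Sum.elim ar fun _ => 0) where
  D := Option A.Q
  interp
    | Sum.inl g => fun v => (finSeq v).bind (A.δ g)
    | Sum.inr j => fun _ => ρ j

theorem eval_runStr_embed (ρ : Fin c → Option A.Q) (t : Tm F ar) :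
    (embed t).eval (runStr A ρ) = A.run t := by
  induction t with
  | app g args ih =>
    show (finSeq fun j => (embed (args j)).eval (runStr A ρ)).bind (A.δ g) = _
    simp only [ih, DTA.run]

variable [Fintype F]

open Classical in
noncomputable def automatonClause :
    Clause ((F ⊕ Fin c) ⊕ Unit) (fAr (Sum.elim ar fun _ => 0) 0) :=
  (Finset.univ : Finset (Σ g : F, Fin (ar g) → A.Q)).toList.filterMap
      (fun p => (A.δ p.1 p.2).map (transLit ι p.1 p.2)) ++
    (Finset.univ.filter (· ∈ A.final)).toList.map (finalLit ι)

theorem mem_automatonClause {l : Lit ((F ⊕ Fin c) ⊕ Unit) (fAr (Sum.elim ar fun _ => 0) 0)} :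
    l ∈ automatonClause A ι ↔
      (∃ g qs q, A.δ g qs = some q ∧ transLit ι g qs q = l) ∨
        ∃ q ∈ A.final, finalLit ι q = l := by
  simp [automatonClause]

theorem automatonClause_case1 : (automatonClause A ι).Case1 := by
  constructor <;> intro l hl <;> rcases (mem_automatonClause A ι).mp hl with
    ⟨g, qs, q, -, rfl⟩ | ⟨q, -, rfl⟩ <;>
    simp [Lit.countF, Tm.countF, transLit, finalLit, countF_freshConstF, countF_fConst]

theorem holds_soSubst_automatonClause (M : Str (F ⊕ Fin c) (Sum.elim ar fun _ => 0))
    (v : Tm F ar) :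
    ((automatonClause A ι).soSubst (embedG v)).holds M ↔
      (∃ g qs q, A.δ g qs = some q ∧
        M.interp (Sum.inl g) (fun j => (freshConst (ι (qs j))).eval M) ≠
          (freshConst (ι q)).eval M) ∨
      ∃ q ∈ A.final, (embed v).eval M = (freshConst (ι q)).eval M := by
  simp [Clause.holds, Clause.soSubst, mem_automatonClause, or_and_right, exists_or,
    holds_soSubst_transLit, holds_soSubst_finalLit]

theorem valid_automatonClause_iff (hι : ι.Injective) (w : Tm F ar) :
    ((automatonClause A ι).soSubst (embedG w)).valid ↔ w ∈ A.lang := by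
  constructor
  · intro hvalid
    let ρ : Fin c → Option A.Q := Function.extend ι some fun _ => none
    have hρ (q : A.Q) : (freshConst (ι q)).eval (runStr A ρ) = some q :=
      hι.extend_apply some (fun _ => none) q
    rcases (holds_soSubst_automatonClause A ι _ w).mp (hvalid (runStr A ρ)) with
      ⟨g, qs, q, hδ, hne⟩ | ⟨q, hq, heq⟩
    · refine absurd ?_ hne
      simp only [hρ]
      exact (congrArg (·.bind (A.δ g)) (finSeq_eq_some_iff.mpr fun _ => rfl)).trans hδ
    · exact ⟨q, hq, (eval_runStr_embed A ρ w).symm.trans (heq.trans (hρ q))⟩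
  · rintro ⟨q, hq, hrun⟩ M
    refine (holds_soSubst_automatonClause A ι M w).mpr (or_iff_not_imp_left.mpr fun hM => ?_)
    push Not at hM
    exact ⟨q, hq, eval_embed_of_run A ι M hM w hrun⟩

end AutomatonClause

section Intersection

variable [Fintype F] {n : ℕ} (A : Fin n → DTA F ar)

noncomputable def intersectionFormula :
    RegEUF (F ⊕ Fin (Fintype.card (Σ i, (A i).Q))) (Sum.elim ar fun _ => 0) 0 where
  clauses := List.ofFn fun i => automatonClause (A i) fun q => Fintype.equivFin _ ⟨i, q⟩
  regular := by
    simp only [List.forall_mem_ofFn_iff]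
    exact fun i => Or.inl (automatonClause_case1 _ _)

theorem solves_intersectionFormula_iff (w : Tm F ar) :
    (intersectionFormula A).solves (embedG w) ↔ ∀ i, w ∈ (A i).lang := by
  simp only [RegEUF.solves, intersectionFormula, List.forall_mem_ofFn_iff]
  refine forall_congr' fun i => valid_automatonClause_iff (A i) _ ?_ w
  exact (Fintype.equivFin _).injective.comp sigma_mk_injective

end Intersection

end Encoding

/-- **Lemma `exp-hard`, reduction.**  For every finite family `L₁,…,L_n` of
regular tree languages over the finite signature `Σ = (F, ar)` there are an extension of
`Σ` by finitely many fresh constants and a regular-EUF formula `φ` over it, with a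
nullary function symbol `f` to be synthesized, such that the set of ground terms
`w ∈ T(Σ)` with `φ{w/f}` valid is exactly `L₁ ∩ … ∩ L_n`.  In particular, for any regular
tree grammar `G` with `L(G) = T(Σ)`, the SyGuS problem `(φ, G, f)` has a solution iff
`L₁ ∩ … ∩ L_n ≠ ∅`. -/
theorem regular_intersection_as_regEUF {F : Type} [Fintype F] (ar : F → ℕ) (n : ℕ)
    (L : Fin n → Set (Tm F ar)) (hL : ∀ i, IsRegularTreeLang (L i)) :
    ∃ (c : ℕ) (φ : RegEUF (F ⊕ Fin c) (Sum.elim ar fun _ => 0) 0),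
      {w : Tm F ar | φ.solves (embedG w)} = ⋂ i, L i ∧
      ∀ G : RTG F ar, G.lang = Set.univ →
        ((∃ w ∈ G.lang, φ.solves (embedG w)) ↔ (⋂ i, L i).Nonempty) := by
  choose A hA using hL
  have hsolutions : {w : Tm F ar | (intersectionFormula A).solves (embedG w)} = ⋂ i, L i := by
    ext w
    simp [solves_intersectionFormula_iff, hA]
  refine ⟨_, intersectionFormula A, hsolutions, fun G hG => ?_⟩
  rw [hG, ← hsolutions]
  simp [Set.Nonempty]

end SyGuS
end
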